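/- arXiv:2302.01651 — 2 statements merged into one kernel-verified Lean document; each statement's English description precedes it below -/
import Mathlib

section
/- Let p be a probability distribution on a finite alphabet X with entropy H(p), let R < (H(p)+1)/2 be fixed, and for each N let S(N) be any set of pairs (i, s) with i ∈ X^N and s ∈ {+,−}^{N−1} such that |S(N)| ≤ 2^{2NR−1}. Assign to (i,s) probability p(i)/2^{N−1} where p(i) = ∏_k p(i_k). Then for every η > 0 there exists N₀ such that for all N ≥ N₀, ∑_{(i,s)∈S(N)} p(i)/2^{N−1} < η. -/
/-!
Write `P(i) = ∏ₖ p(iₖ)` and `δ = (H(p) + 1 - 2R)/2 > 0`. On strings whose information content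
`∑ₖ -log₂ p(iₖ)` is at least `N(H(p) - δ)` one has `P(i) ≤ 2^{-N(H(p) - δ)}`, so these members
of `S(N)` carry total weight at most `2^{2NR-1} · 2^{-N(H(p) - δ)} / 2^{N-1} = 2^{-Nδ}`.
The remaining strings deviate from the mean `N H(p)` of the information content by at least
`Nδ`; after summing out the sign strings, Chebyshev's inequality, with the variance `N σ²` of
this sum of independent terms (`σ²` the variance of `-log₂ p`), bounds their weight by
`σ² / (N δ²)`.
-/

open Finset Filter

/-- Shannon entropy in bits of a distribution on a finite alphabet. -/
noncomputable def shannonH {X : Type*} [Fintype X] (p : X → ℝ) : ℝ :=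
  -∑ x, p x * Real.logb 2 (p x)

open Real Topology

lemma prod_le_two_rpow_neg_of_le_sum_neg_logb {ι : Type*} (s : Finset ι) {a : ι → ℝ}
    (ha : ∀ k, 0 ≤ a k) {t : ℝ} (ht : t ≤ ∑ k ∈ s, -logb 2 (a k)) :
    ∏ k ∈ s, a k ≤ 2 ^ (-t) := by
  by_cases hzero : ∃ k ∈ s, a k = 0
  · obtain ⟨k, hk, hak⟩ := hzero
    rw [prod_eq_zero hk hak]
    positivity
  push Not at hzero
  have hprod : ∏ k ∈ s, a k = 2 ^ (∑ k ∈ s, logb 2 (a k)) := by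
    rw [rpow_sum_of_pos two_pos]
    exact prod_congr rfl fun k hk =>
      (rpow_logb two_pos (by norm_num) ((ha k).lt_of_ne' (hzero k hk))).symm
  rw [hprod, rpow_le_rpow_left_iff one_lt_two]
  rw [sum_neg_distrib] at ht
  linarith

section ProductDistribution

variable {ι X : Type*} [Fintype ι] [Fintype X] {p g : X → ℝ}

lemma sum_prod_mul_mul_eq_ite [DecidableEq ι] (hsum : ∑ x, p x = 1)
    (hg : ∑ x, p x * g x = 0) (k l : ι) :
    ∑ i : ι → X, (∏ m, p (i m)) * (g (i k) * g (i l)) =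
      if k = l then ∑ x, p x * g x ^ 2 else 0 := by
  set u : ι → X → ℝ := fun m x => p x * (if k = m then g x else 1) * (if l = m then g x else 1)
  have hfactor : ∀ i : ι → X, (∏ m, p (i m)) * (g (i k) * g (i l)) = ∏ m, u m (i m) := by
    intro i
    simp only [u, prod_mul_distrib, prod_ite_eq, mem_univ, if_true, mul_assoc]
  rw [sum_congr rfl fun i _ => hfactor i, ← Fintype.prod_sum]
  -- off the diagonal the factor at `k` is the mean of `g`
  split_ifs with hkl
  · subst hkl
    rw [prod_eq_single k (fun m _ hm => by simp [u, Ne.symm hm, hsum]) (by simp)]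
    simp [u, sq, mul_assoc]
  · exact prod_eq_zero (mem_univ k) (by simpa [u, Ne.symm hkl] using hg)

lemma sum_prod_mul_sum_sq [DecidableEq ι] (hsum : ∑ x, p x = 1) (hg : ∑ x, p x * g x = 0) :
    ∑ i : ι → X, (∏ m, p (i m)) * (∑ k, g (i k)) ^ 2 =
      Fintype.card ι * ∑ x, p x * g x ^ 2 := by
  calc _ = ∑ k, ∑ l, ∑ i : ι → X, (∏ m, p (i m)) * (g (i k) * g (i l)) := by
        simp_rw [sq, sum_mul_sum, mul_sum]
        rw [sum_comm]
        exact sum_congr rfl fun k _ => sum_comm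
    _ = Fintype.card ι * ∑ x, p x * g x ^ 2 := by
        simp [sum_prod_mul_mul_eq_ite hsum hg]

end ProductDistribution

lemma sum_le_sum_mul_sq_div_sq {α : Type*} [Fintype α] {w Y : α → ℝ} (hw : ∀ i, 0 ≤ w i)
    {a : ℝ} (ha : 0 < a) {s : Finset α} (hs : ∀ i ∈ s, a ≤ |Y i|) :
    ∑ i ∈ s, w i ≤ (∑ i, w i * Y i ^ 2) / a ^ 2 := by
  rw [le_div_iff₀ (by positivity), sum_mul]
  calc ∑ i ∈ s, w i * a ^ 2 ≤ ∑ i ∈ s, w i * Y i ^ 2 :=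
        sum_le_sum fun i hi => mul_le_mul_of_nonneg_left
          (sq_abs (Y i) ▸ pow_le_pow_left₀ ha.le (hs i hi) 2) (hw i)
    _ ≤ ∑ i, w i * Y i ^ 2 :=
        sum_le_sum_of_subset_of_nonneg (subset_univ s) fun i _ _ =>
          mul_nonneg (hw i) (sq_nonneg _)

lemma sum_prod_le_of_le_abs_sum {ι X : Type*} [Fintype ι] [DecidableEq ι] [Nonempty ι]
    [Fintype X] {p g : X → ℝ} (hpos : ∀ x, 0 ≤ p x) (hsum : ∑ x, p x = 1) (hg : ∑ x, p x * g x = 0)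
    {δ : ℝ} (hδ : 0 < δ) {s : Finset (ι → X)}
    (hs : ∀ i ∈ s, Fintype.card ι * δ ≤ |∑ k, g (i k)|) :
    ∑ i ∈ s, ∏ k, p (i k) ≤ (∑ x, p x * g x ^ 2) / (Fintype.card ι * δ ^ 2) := by
  have hcard : (0 : ℝ) < Fintype.card ι := by exact_mod_cast Fintype.card_pos
  calc _ ≤ (∑ i : ι → X, (∏ k, p (i k)) * (∑ k, g (i k)) ^ 2) / (Fintype.card ι * δ) ^ 2 :=
        sum_le_sum_mul_sq_div_sq (fun i => prod_nonneg fun k _ => hpos _) (by positivity) hs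
    _ = _ := by
        rw [sum_prod_mul_sum_sq hsum hg]
        field_simp

lemma sum_div_card_le_sum_image_fst {α β : Type*} [DecidableEq α] [Fintype β] [Nonempty β]
    (S : Finset (α × β)) {F : α → ℝ} (hF : ∀ a, 0 ≤ F a) :
    ∑ x ∈ S, F x.1 / Fintype.card β ≤ ∑ a ∈ S.image Prod.fst, F a := by
  calc ∑ x ∈ S, F x.1 / Fintype.card β
      ≤ ∑ x ∈ S.image Prod.fst ×ˢ univ, F x.1 / Fintype.card β :=
        sum_le_sum_of_subset_of_nonneg
          (fun x hx => mem_product.2 ⟨mem_image_of_mem _ hx, mem_univ _⟩)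
          fun _ _ _ => div_nonneg (hF _) (Nat.cast_nonneg _)
    _ = ∑ a ∈ S.image Prod.fst, F a := by
        rw [sum_product]
        refine sum_congr rfl fun a _ => ?_
        simp only [sum_const, card_univ, nsmul_eq_mul]
        field_simp

lemma tendsto_two_rpow_neg_mul_add_div {δ : ℝ} (hδ : 0 < δ) (C : ℝ) :
    Tendsto (fun N : ℕ => (2 : ℝ) ^ (-(N * δ)) + C / (N * δ ^ 2)) atTop (𝓝 0) := by
  have hlin : Tendsto (fun N : ℕ => (N : ℝ) * δ) atTop atTop :=
    tendsto_natCast_atTop_atTop.atTop_mul_const hδ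
  simpa using ((tendsto_rpow_atBot_of_base_gt_one 2 one_lt_two).comp
    (tendsto_neg_atTop_atBot.comp hlin)).add
    (tendsto_const_nhds.div_atTop (tendsto_natCast_atTop_atTop.atTop_mul_const (pow_pos hδ 2)))

lemma sum_filter_le_card_mul_two_rpow_neg {ι X β : Type*} [Fintype ι] {p : X → ℝ}
    (hpos : ∀ x, 0 ≤ p x) (t : ℝ) {c : ℝ} (hc : 0 ≤ c) (S : Finset ((ι → X) × β)) :
    ∑ x ∈ S.filter (fun x => t ≤ ∑ k, -logb 2 (p (x.1 k))), (∏ k, p (x.1 k)) / c ≤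
      S.card * (2 ^ (-t) / c) := by
  calc _ ≤ (S.filter fun x : (ι → X) × β => t ≤ ∑ k, -logb 2 (p (x.1 k))).card *
        (2 ^ (-t) / c) := by
        rw [← nsmul_eq_mul]
        exact sum_le_card_nsmul _ _ _ fun x hx => div_le_div_of_nonneg_right
          (prod_le_two_rpow_neg_of_le_sum_neg_logb _ (fun k => hpos _) (mem_filter.1 hx).2) hc
    _ ≤ S.card * (2 ^ (-t) / c) := by
        gcongr
        exact filter_subset _ _

lemma sum_atypical_div_two_pow_le {X : Type*} [Fintype X] {p : X → ℝ} (hpos : ∀ x, 0 ≤ p x)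
    (hsum : ∑ x, p x = 1) {δ : ℝ} (hδ : 0 < δ) {N : ℕ} (hN : 0 < N)
    (S : Finset ((Fin N → X) × (Fin (N - 1) → Bool))) :
    ∑ x ∈ S.filter (fun x => ¬ N * (shannonH p - δ) ≤ ∑ k, -logb 2 (p (x.1 k))),
        (∏ k, p (x.1 k)) / 2 ^ (N - 1) ≤
      (∑ x, p x * (-logb 2 (p x) - shannonH p) ^ 2) / (N * δ ^ 2) := by
  classical
  have : Nonempty (Fin N) := Fin.pos_iff_nonempty.1 hN
  have hmean : ∑ x, p x * (-logb 2 (p x) - shannonH p) = 0 := by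
    simp only [mul_sub, sum_sub_distrib, ← sum_mul, hsum, one_mul, shannonH, mul_neg,
      sum_neg_distrib, sub_self]
  have hcard : (2 : ℝ) ^ (N - 1) = Fintype.card (Fin (N - 1) → Bool) := by simp
  rw [hcard]
  refine (sum_div_card_le_sum_image_fst _ (F := fun i : Fin N → X => ∏ k, p (i k))
    fun i => prod_nonneg fun k _ => hpos _).trans ?_
  have hdev : ∀ i ∈ (S.filter fun x => ¬ N * (shannonH p - δ) ≤ ∑ k, -logb 2 (p (x.1 k))).image
      Prod.fst, Fintype.card (Fin N) * δ ≤ |∑ k, (-logb 2 (p (i k)) - shannonH p)| := by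
    intro i hi
    obtain ⟨x, hx, rfl⟩ := mem_image.1 hi
    have hlt := not_le.1 (mem_filter.1 hx).2
    have hNδ : (0 : ℝ) < N * δ := mul_pos (Nat.cast_pos.2 hN) hδ
    simp only [Fintype.card_fin, sum_sub_distrib, sum_const, card_univ, nsmul_eq_mul]
    rw [abs_of_neg (by linarith)]
    linarith
  simpa using sum_prod_le_of_le_abs_sum hpos hsum hmean hδ hdev

/-- Any family of sets of (index string, sign string) pairs of cardinality at
most `2^{2NR-1}` with `R < (H(p)+1)/2` carries vanishing probability weight. -/
theorem small_sets_vanishing_weight {X : Type*} [Fintype X]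
    (p : X → ℝ) (hpos : ∀ x, 0 ≤ p x) (hsum : ∑ x, p x = 1)
    (R : ℝ) (hR : R < (shannonH p + 1) / 2)
    (S : (N : ℕ) → Finset ((Fin N → X) × (Fin (N - 1) → Bool)))
    (hcard : ∀ N, ((S N).card : ℝ) ≤ (2 : ℝ) ^ (2 * (N : ℝ) * R - 1)) :
    ∀ η > 0, ∃ N₀, ∀ N ≥ N₀,
      ∑ x ∈ S N, (∏ k, p (x.1 k)) / 2 ^ (N - 1) < η := by
  intro η hη
  set H := shannonH p
  set δ := (H + 1 - 2 * R) / 2 with hδ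
  have hδpos : 0 < δ := by linarith
  obtain ⟨N₀, hN₀⟩ := eventually_atTop.1
    (((tendsto_two_rpow_neg_mul_add_div hδpos _).eventually_lt_const hη).and
      (eventually_gt_atTop 0))
  refine ⟨N₀, fun N hN => ?_⟩
  obtain ⟨hlt, hNpos⟩ := hN₀ N hN
  rw [← sum_filter_add_sum_filter_not (S N)
    fun x => N * (H - δ) ≤ ∑ k, -logb 2 (p (x.1 k))]
  refine lt_of_le_of_lt (add_le_add ?_ (sum_atypical_div_two_pow_le hpos hsum hδpos hNpos _)) hlt
  calc _ ≤ ((S N).card : ℝ) * ((2 : ℝ) ^ (-(N * (H - δ))) / 2 ^ (N - 1)) :=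
        sum_filter_le_card_mul_two_rpow_neg hpos _ (by positivity) _
    _ ≤ (2 : ℝ) ^ (2 * N * R - 1) * (2 ^ (-(N * (H - δ))) / 2 ^ (N - 1)) := by
        gcongr
        exact hcard N
    _ = (2 : ℝ) ^ (-(N * δ)) := by
        rw [← rpow_natCast, Nat.cast_pred hNpos, mul_div_assoc', ← rpow_add two_pos,
          ← rpow_sub two_pos, hδ]
        ring_nf
end

section
/- Converse counting bound: let p be a probability distribution on X with entropy H(p), and suppose a decoder assigns to each of at most 2^{2M−1} codewords t a single string (i(t), s(t)) ∈ X^N × {±}^{N−1}. If 2M − 1 < N·H(p) + N − 1 − Nε for some ε > 0, then the total recovered probability ∑_t p(i(t))/2^{N−1} is at most the sum of p(i)/2^{N−1} over a set of at most 2^{2M−1} pairs, which tends to 0 as N → ∞ (with M/N fixed below (H(p)+1)/2). -/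
/-!
A Chernoff-type argument. Since the Rényi entropy `logb 2 (∑ p^β) / (1 - β)` tends to `H(p)` as
`β → 1`, some `β > 1` keeps it above `2R - 1`. Split the decoded strings at the weight threshold
`t = 2^(-aN)`: the light ones contribute at most `|S| t ≤ 2^((2R - a)N)`, the heavy ones at most
`t^(1-β) ∑ W^β = t^(1-β) 2^(-(β-1)(N-1)) (∑ p^β)^N`. Any `a` strictly between `2R` and
`1 - logb 2 (∑ p^β) / (β - 1)` makes both bounds decay geometrically.
-/

open Finset Filter

open Real Topology

theorem le_add_rpow_mul_rpow {w t β : ℝ} (hw : 0 ≤ w) (ht : 0 < t) (hβ : 1 ≤ β) :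
    w ≤ t + t ^ (1 - β) * w ^ β := by
  rcases le_or_gt w t with hwt | htw
  · have : 0 ≤ t ^ (1 - β) * w ^ β := by positivity
    linarith
  · calc w = w ^ (1 - β) * w ^ β := by
          rw [← rpow_add (ht.trans htw), sub_add_cancel, rpow_one]
      _ ≤ t ^ (1 - β) * w ^ β := by
          gcongr ?_ * _
          exact rpow_le_rpow_of_nonpos ht htw.le (sub_nonpos.2 hβ)
      _ ≤ t + t ^ (1 - β) * w ^ β := le_add_of_nonneg_left ht.le

theorem sum_le_card_mul_add_rpow_mul_sum_rpow {α : Type*} [Fintype α] {w : α → ℝ}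
    (hw : ∀ x, 0 ≤ w x) (s : Finset α) {t β : ℝ} (ht : 0 < t) (hβ : 1 ≤ β) :
    ∑ x ∈ s, w x ≤ #s * t + t ^ (1 - β) * ∑ x, w x ^ β :=
  calc ∑ x ∈ s, w x ≤ ∑ x ∈ s, (t + t ^ (1 - β) * w x ^ β) :=
        sum_le_sum fun x _ => le_add_rpow_mul_rpow (hw x) ht hβ
    _ = #s * t + t ^ (1 - β) * ∑ x ∈ s, w x ^ β := by
        rw [sum_add_distrib, sum_const, nsmul_eq_mul, mul_sum]
    _ ≤ #s * t + t ^ (1 - β) * ∑ x, w x ^ β := by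
        gcongr
        · exact fun x _ _ => rpow_nonneg (hw x) β
        · exact subset_univ s

theorem tendsto_rpow_mul_natCast_atTop_zero {b c : ℝ} (hb : 1 < b) (hc : c < 0) :
    Tendsto (fun N : ℕ => b ^ (c * N)) atTop (𝓝 0) := by
  simp_rw [rpow_mul_natCast (by linarith : 0 ≤ b)]
  exact tendsto_pow_atTop_nhds_zero_of_lt_one (by positivity) (rpow_lt_one_of_one_lt_of_neg hb hc)

section Renyi

variable {X : Type*} [Fintype X] {p : X → ℝ}

theorem hasDerivAt_sum_rpow_one (hp : ∀ x, 0 ≤ p x) :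
    HasDerivAt (fun b : ℝ => ∑ x, p x ^ b) (∑ x, p x * log (p x)) 1 := by
  refine HasDerivAt.fun_sum fun x _ => ?_
  rcases (hp x).eq_or_lt with hx | hx
  · have hzero : (fun b : ℝ => p x ^ b) =ᶠ[𝓝 1] fun _ => 0 := by
      filter_upwards [eventually_ne_nhds one_ne_zero] with b hb
      rw [← hx, zero_rpow hb]
    simpa [← hx] using (hasDerivAt_const (1 : ℝ) (0 : ℝ)).congr_of_eventuallyEq hzero
  · simpa using (hasStrictDerivAt_const_rpow hx 1).hasDerivAt

theorem exists_one_lt_logb_sum_rpow_lt (hp : ∀ x, 0 ≤ p x) (hsum : ∑ x, p x = 1) {c : ℝ}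
    (hc : -shannonH p < c) : ∃ β > 1, logb 2 (∑ x, p x ^ β) < c * (β - 1) := by
  have hderiv : HasDerivAt (fun b : ℝ => logb 2 (∑ x, p x ^ b)) (-shannonH p) 1 := by
    refine (((hasDerivAt_sum_rpow_one hp).log (by simp [hsum])).div_const (log 2)).congr_deriv ?_
    simp only [shannonH, neg_neg, rpow_one, hsum, div_one, logb, Finset.sum_div, mul_div_assoc]
  have hslope := (hderiv.hasDerivWithinAt (s := Set.Ioi 1)).limsup_slope_le' (lt_irrefl 1) hc
  obtain ⟨β, hβc, hβ⟩ := (hslope.and self_mem_nhdsWithin).exists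
  refine ⟨β, hβ, ?_⟩
  rw [slope_def_field] at hβc
  simpa [hsum, div_lt_iff₀ (sub_pos.2 hβ)] using hβc

end Renyi

section Weight

variable {X : Type*} {p : X → ℝ}

noncomputable def signedWeight (p : X → ℝ) (N m : ℕ) (x : (Fin N → X) × (Fin m → Bool)) : ℝ :=
  (∏ k, p (x.1 k)) / 2 ^ m

theorem signedWeight_nonneg (hp : ∀ x, 0 ≤ p x) {N m : ℕ} (x : (Fin N → X) × (Fin m → Bool)) :
    0 ≤ signedWeight p N m x :=
  div_nonneg (prod_nonneg fun k _ => hp _) (by positivity)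

theorem sum_signedWeight_rpow [Fintype X] (hp : ∀ x, 0 ≤ p x) (N m : ℕ) (β : ℝ) :
    ∑ x, signedWeight p N m x ^ β = (∑ a, p a ^ β) ^ N * 2 ^ ((1 - β) * m) := by
  have hpow : ∀ x : (Fin N → X) × (Fin m → Bool),
      signedWeight p N m x ^ β = (∏ k, p (x.1 k) ^ β) * 2 ^ (-(m * β)) := by
    intro x
    rw [signedWeight, div_rpow (prod_nonneg fun k _ => hp _) (by positivity),
      ← finsetProd_rpow _ _ fun k _ => hp _, ← rpow_natCast, ← rpow_mul zero_le_two,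
      div_eq_mul_inv, ← rpow_neg zero_le_two]
  have hcard : ((Fintype.card (Fin m → Bool) : ℕ) : ℝ) = 2 ^ (m : ℝ) := by simp
  simp_rw [hpow, Fintype.sum_prod_type, sum_const, card_univ, nsmul_eq_mul]
  rw [← mul_sum, ← sum_mul, Fintype.sum_pow (fun a => p a ^ β), hcard, mul_left_comm,
    ← rpow_add two_pos]
  ring_nf

theorem sum_signedWeight_le [Fintype X] (hp : ∀ x, 0 ≤ p x) (hsum : ∑ x, p x = 1) {β : ℝ}
    (hβ : 1 ≤ β) (a κ : ℝ) {N : ℕ} (hN : 1 ≤ N) {s : Finset ((Fin N → X) × (Fin (N - 1) → Bool))}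
    (hs : (#s : ℝ) ≤ 2 ^ κ) :
    ∑ x ∈ s, signedWeight p N (N - 1) x ≤
      2 ^ (κ - a * N) +
        2 ^ (β - 1) * 2 ^ ((a * (β - 1) + logb 2 (∑ x, p x ^ β) - (β - 1)) * N) := by
  have hG : 0 < ∑ x, p x ^ β := by
    obtain ⟨x, -, hx⟩ := exists_lt_of_sum_lt (s := univ) (f := 0) (g := p) (by simp [hsum])
    exact sum_pos' (fun x _ => rpow_nonneg (hp x) β) ⟨x, mem_univ x, rpow_pos_of_pos hx β⟩
  have hmoment := sum_le_card_mul_add_rpow_mul_sum_rpow (signedWeight_nonneg hp) s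
    (t := 2 ^ (-(a * N))) (by positivity) hβ
  rw [sum_signedWeight_rpow hp, ← rpow_logb two_pos one_lt_two.ne' hG] at hmoment
  calc _ ≤ _ := hmoment
    _ ≤ 2 ^ κ * 2 ^ (-(a * N)) + _ := by gcongr
    _ = _ := by
      rw [Nat.cast_pred hN, ← rpow_mul_natCast zero_le_two, ← rpow_mul zero_le_two]
      simp only [← rpow_add two_pos]
      congr 2; ring

end Weight

/-- Converse counting bound: if a decoder recovers at most `2^{2M-1}`
pairs `(i,s)` and `M/N` stays below `(H(p)+1)/2`, then the total recovered
probability tends to `0`. -/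
theorem converse_counting_bound {X : Type*} [Fintype X]
    (p : X → ℝ) (hpos : ∀ x, 0 ≤ p x) (hsum : ∑ x, p x = 1)
    (R : ℝ) (hR : R < (shannonH p + 1) / 2)
    (M : ℕ → ℕ) (hM : ∀ N, 1 ≤ N → (M N : ℝ) ≤ R * N)
    (dec : (N : ℕ) → Finset ((Fin N → X) × (Fin (N - 1) → Bool)))
    (hdec : ∀ N, ((dec N).card : ℝ) ≤ (2 : ℝ) ^ (2 * (M N : ℝ) - 1)) :
    Tendsto (fun N : ℕ => ∑ x ∈ dec N, (∏ k, p (x.1 k)) / 2 ^ (N - 1))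
      atTop (nhds 0) := by
  obtain ⟨β, hβ, hgap⟩ := exists_one_lt_logb_sum_rpow_lt hpos hsum (c := 1 - 2 * R) (by linarith)
  set L := logb 2 (∑ x, p x ^ β)
  set d := β - 1
  have hd : 0 < d := sub_pos.2 hβ
  obtain ⟨a, hRa, haL⟩ : ∃ a, 2 * R < a ∧ a < (d - L) / d :=
    exists_between (by rw [lt_div_iff₀ hd]; linarith)
  have hdecay : a * d + L - d < 0 := by
    rw [lt_div_iff₀ hd] at haL
    linarith
  have hbound : ∀ N ≥ 1, ∑ x ∈ dec N, signedWeight p N (N - 1) x ≤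
      2 ^ ((2 * R - a) * N) + 2 ^ d * 2 ^ ((a * d + L - d) * N) := by
    intro N hN
    refine (sum_signedWeight_le hpos hsum hβ.le a _ hN (hdec N)).trans ?_
    gcongr
    · exact one_le_two
    · linarith [hM N hN]
  change Tendsto (fun N => ∑ x ∈ dec N, signedWeight p N (N - 1) x) atTop (𝓝 0)
  refine squeeze_zero' (.of_forall fun N => sum_nonneg fun x _ => signedWeight_nonneg hpos x)
    (eventually_atTop.2 ⟨1, hbound⟩) ?_
  simpa using (tendsto_rpow_mul_natCast_atTop_zero one_lt_two (sub_neg.2 hRa)).add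
    ((tendsto_rpow_mul_natCast_atTop_zero one_lt_two hdecay).const_mul (2 ^ d))
end
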